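/- If G is a graph such that for every edge ab ∈ E(G), the localization G_{ab} is well-covered and α(G_{ab}) = α(G) − 1, then G is well-covered. -/

import Mathlib

open Classical

noncomputable section

variable {V : Type*}

/-- `s` is an independent set of `G`. -/
def IndepSet (G : SimpleGraph V) (s : Set V) : Prop :=
  ∀ ⦃a⦄, a ∈ s → ∀ ⦃b⦄, b ∈ s → ¬ G.Adj a b

/-- The independence number `α(G)`. -/
def alphaNum [Fintype V] (G : SimpleGraph V) : ℕ :=
  sSup {n | ∃ s : Set V, IndepSet G s ∧ s.ncard = n}

/-- `s` is a maximal independent set of `G`. -/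
def MaximalIndep (G : SimpleGraph V) (s : Set V) : Prop :=
  IndepSet G s ∧ ∀ t : Set V, IndepSet G t → s ⊆ t → s = t

/-- `G` is well-covered: all maximal independent sets have cardinality `α(G)`. -/
def WellCovered [Fintype V] (G : SimpleGraph V) : Prop :=
  ∀ s : Set V, MaximalIndep G s → s.ncard = alphaNum G

/-- The open neighborhood `N_G(S)` of a set of vertices. -/
def openNbhd (G : SimpleGraph V) (S : Set V) : Set V :=
  {v | v ∉ S ∧ ∃ u ∈ S, G.Adj u v}

/-- The closed neighborhood `N_G[S]`. -/
def closedNbhd (G : SimpleGraph V) (S : Set V) : Set V :=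
  S ∪ openNbhd G S

/-- The vertex set of the localization `G_S = G - N_G[S]`. -/
def localSet (G : SimpleGraph V) (S : Set V) : Set V :=
  (closedNbhd G S)ᶜ

/-- `G` belongs to the class `W_p`. -/
def Wp (p : ℕ) [Fintype V] (G : SimpleGraph V) : Prop :=
  p ≤ Fintype.card V ∧
    ∀ A : Fin p → Set V,
      (∀ i, IndepSet G (A i)) →
      (∀ i j, i ≠ j → Disjoint (A i) (A j)) →
      ∃ S : Fin p → Set V,
        (∀ i j, i ≠ j → Disjoint (S i) (S j)) ∧
        (∀ i, IndepSet G (S i) ∧ (S i).ncard = alphaNum G) ∧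
        (∀ i, A i ⊆ S i)

/-- `G` is `α`-critical: deleting any edge increases the independence number. -/
def AlphaCritical [Fintype V] (G : SimpleGraph V) : Prop :=
  ∀ a b : V, G.Adj a b → alphaNum G < alphaNum (G.deleteEdges {s(a, b)})

/-- The vertex set of `G_{ab} = G - (N_G(a) ∪ N_G(b))`. -/
def edgeLocalSet (G : SimpleGraph V) (a b : V) : Set V :=
  (G.neighborSet a ∪ G.neighborSet b)ᶜ

/-!
Every independent set `S` lies in a maximum one, which gives well-coveredness. Among the maximum
independent sets choose `I` meeting `S` in as many vertices as possible, and suppose some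
`u ∈ S` lies outside `I`. As `I` is maximum, `u` has a neighbour `v ∈ I`. The vertices of `I`
not adjacent to `u` lie in `G_{uv}`; extend them to a maximal independent set `T` of `G_{uv}`,
which has `α(G) - 1` vertices because `G_{uv}` is well-covered. Then `T ∪ {u}` is a maximum
independent set of `G` containing `(I ∩ S) ∪ {u}`, contradicting the choice of `I`.
-/

section Independence

variable {G : SimpleGraph V} {s : Set V} {u : V}

theorem indepSet_insert_iff :
    IndepSet G (insert u s) ↔ IndepSet G s ∧ ∀ x ∈ s, ¬ G.Adj u x := by
  refine ⟨fun h => ⟨fun a ha b hb => h (.inr ha) (.inr hb),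
    fun x hx => h (.inl rfl) (.inr hx)⟩, fun ⟨hs, hu⟩ => ?_⟩
  rintro a (rfl | ha) b (rfl | hb) hab
  · exact G.loopless.irrefl _ hab
  · exact hu b hb hab
  · exact hu a ha hab.symm
  · exact hs ha hb hab

theorem IndepSet.image_val {L : Set V} {T : Set L} (hT : IndepSet (G.induce L) T) :
    IndepSet G (Subtype.val '' T) := by
  rintro _ ⟨x, hx, rfl⟩ _ ⟨y, hy, rfl⟩
  exact hT hx hy

theorem IndepSet.exists_maximalIndep_superset [Finite V] (hs : IndepSet G s) :
    ∃ t, s ⊆ t ∧ MaximalIndep G t := by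
  obtain ⟨t, hst, ht⟩ := Finite.exists_le_maximal hs
  exact ⟨t, hst, ht.1, fun t' ht' htt' => htt'.antisymm (ht.2 ht' htt')⟩

variable [Fintype V]

theorem bddAbove_ncard_indepSet (G : SimpleGraph V) :
    BddAbove {n | ∃ s : Set V, IndepSet G s ∧ s.ncard = n} :=
  ⟨Nat.card V, by rintro _ ⟨s, -, rfl⟩; exact Set.ncard_le_card s⟩

theorem IndepSet.ncard_le_alphaNum (hs : IndepSet G s) : s.ncard ≤ alphaNum G :=
  le_csSup (bddAbove_ncard_indepSet G) ⟨s, hs, rfl⟩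

theorem exists_indepSet_ncard_eq_alphaNum (G : SimpleGraph V) :
    ∃ s : Set V, IndepSet G s ∧ s.ncard = alphaNum G := by
  refine Nat.sSup_mem ?_ (bddAbove_ncard_indepSet G)
  exact ⟨0, ∅, fun _ h => h.elim, Set.ncard_empty V⟩

theorem IndepSet.exists_adj_of_ncard_eq_alphaNum (hs : IndepSet G s)
    (hcard : s.ncard = alphaNum G) (hu : u ∉ s) : ∃ v ∈ s, G.Adj u v := by
  by_contra! hnadj
  have hins := (indepSet_insert_iff.mpr ⟨hs, hnadj⟩).ncard_le_alphaNum
  rw [Set.ncard_insert_of_notMem hu] at hins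
  omega

theorem wellCovered_of_forall_subset_maximum
    (h : ∀ s, IndepSet G s → ∃ I, IndepSet G I ∧ I.ncard = alphaNum G ∧ s ⊆ I) :
    WellCovered G := by
  intro s hs
  obtain ⟨I, hI, hcard, hsI⟩ := h s hs.1
  rw [hs.2 I hI hsI, hcard]

end Independence

section EdgeLocalization

variable [Fintype V] {G : SimpleGraph V}

theorem exists_maximum_insert_of_edgeLocal
    (h : ∀ a b : V, G.Adj a b →
      WellCovered (G.induce (edgeLocalSet G a b)) ∧
        alphaNum (G.induce (edgeLocalSet G a b)) = alphaNum G - 1)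
    {I : Set V} (hI : IndepSet G I) (hcard : I.ncard = alphaNum G) {u : V} (hu : u ∉ I) :
    ∃ J, IndepSet G J ∧ J.ncard = alphaNum G ∧ insert u {x ∈ I | ¬ G.Adj u x} ⊆ J := by
  obtain ⟨v, hvI, huv⟩ := hI.exists_adj_of_ncard_eq_alphaNum hcard hu
  obtain ⟨hWC, hα⟩ := h u v huv
  have hIL : IndepSet (G.induce (edgeLocalSet G u v)) (Subtype.val ⁻¹' I) :=
    fun _ ha _ hb => hI ha hb
  obtain ⟨T, hIT, hT⟩ := hIL.exists_maximalIndep_superset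
  have huT : u ∉ Subtype.val '' T := by
    rintro ⟨x, -, hxu⟩
    exact x.2 (.inr (by rw [SimpleGraph.mem_neighborSet, hxu]; exact huv.symm))
  have hJ : IndepSet G (insert u (Subtype.val '' T)) := by
    refine indepSet_insert_iff.mpr ⟨hT.1.image_val, ?_⟩
    rintro _ ⟨x, -, rfl⟩ hux
    exact x.2 (.inl hux)
  refine ⟨_, hJ, ?_, Set.insert_subset_insert ?_⟩
  · -- `α(G) - 1 + 1 = α(G)` needs `α(G) > 0`, witnessed by `v ∈ I`
    have hpos : 0 < I.ncard := (Set.ncard_pos).mpr ⟨v, hvI⟩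
    rw [Set.ncard_insert_of_notMem huT, Set.ncard_image_of_injective _ Subtype.val_injective,
      hWC T hT, hα]
    omega
  · rintro x ⟨hxI, hux⟩
    have hxL : x ∈ edgeLocalSet G u v := by
      rintro (hux' | hvx)
      exacts [hux hux', hI hvI hxI hvx]
    exact ⟨⟨x, hxL⟩, hIT hxI, rfl⟩

theorem IndepSet.exists_maximum_superset_of_edgeLocal
    (h : ∀ a b : V, G.Adj a b →
      WellCovered (G.induce (edgeLocalSet G a b)) ∧
        alphaNum (G.induce (edgeLocalSet G a b)) = alphaNum G - 1)
    {S : Set V} (hS : IndepSet G S) :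
    ∃ I, IndepSet G I ∧ I.ncard = alphaNum G ∧ S ⊆ I := by
  obtain ⟨I, ⟨hI, hcard⟩, hbest⟩ :=
    Set.exists_max_image {I : Set V | IndepSet G I ∧ I.ncard = alphaNum G} (fun I => (I ∩ S).ncard)
      (Set.toFinite _) (exists_indepSet_ncard_eq_alphaNum G)
  refine ⟨I, hI, hcard, fun u huS => by_contra fun huI => ?_⟩
  obtain ⟨J, hJ, hJcard, hsub⟩ := exists_maximum_insert_of_edgeLocal h hI hcard huI
  have hgrow : insert u (I ∩ S) ⊆ J ∩ S := by
    rintro x (rfl | ⟨hxI, hxS⟩)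
    · exact ⟨hsub (.inl rfl), huS⟩
    · exact ⟨hsub (.inr ⟨hxI, hS huS hxS⟩), hxS⟩
  have hlt := (Set.ncard_le_ncard hgrow).trans (hbest J ⟨hJ, hJcard⟩)
  rw [Set.ncard_insert_of_notMem fun hu => huI hu.1] at hlt
  omega

end EdgeLocalization

theorem stmt4 [Fintype V] (G : SimpleGraph V)
    (h : ∀ a b : V, G.Adj a b →
      WellCovered (G.induce (edgeLocalSet G a b)) ∧
        alphaNum (G.induce (edgeLocalSet G a b)) = alphaNum G - 1) :
    WellCovered G :=
  wellCovered_of_forall_subset_maximum fun _ hS => hS.exists_maximum_superset_of_edgeLocal h
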